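/- For the controlled chain X̄^n driven by the controls built from ψ*, one has almost surely lim_{n→∞} sup_{0≤j≤n} |X̄^n(j) − (1/n)Σ_{l=0}^{j−1} ψ̇*(l/n) − c^d| = 0; in particular, the interpolated controlled paths converge uniformly to ψ* almost surely. -/

import Mathlib

open MeasureTheory Real Set Filter Topology
open scoped ENNReal

noncomputable section

attribute [local instance] Classical.propDecidable

/-! ## Basic setting -/

abbrev I01 : Set ℝ := Set.Icc (0:ℝ) 1

def pt0 : I01 := ⟨0, Set.left_mem_Icc.mpr zero_le_one⟩

/-- Piecewise continuity on `[0,1]`: continuity off finitely many points. -/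
def PiecewiseContinuousOn01 (f : ℝ → ℝ) : Prop :=
  ∃ D : Finset ℝ, ∀ t ∈ Set.Icc (0:ℝ) 1, t ∉ D → ContinuousWithinAt f (Set.Icc (0:ℝ) 1) t

/-- Piecewise continuity on `[0,∞)`. -/
def PiecewiseContinuousOnIci (f : ℝ → ℝ) : Prop :=
  ∃ D : Set ℝ, (∀ T > (0:ℝ), (D ∩ Set.Icc 0 T).Finite) ∧
    ∀ t ∈ Set.Ici (0:ℝ), t ∉ D → ContinuousWithinAt f (Set.Ici (0:ℝ)) t

/-- Assumption (ND) on the time-dependent parameters `p, β`. -/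
structure ND (p β : ℝ → ℝ) (p0 β0 β1 : ℝ) : Prop where
  p_nonneg : ∀ t ∈ Set.Icc (0:ℝ) 1, 0 ≤ p t
  p_le : ∀ t ∈ Set.Icc (0:ℝ) 1, p t ≤ p0
  p0_lt_one : p0 < 1
  β_lb : ∀ t ∈ Set.Icc (0:ℝ) 1, β0 ≤ β t
  β_ub : ∀ t ∈ Set.Icc (0:ℝ) 1, β t ≤ β1
  β0_pos : 0 < β0
  p_pc : PiecewiseContinuousOn01 p
  β_pc : PiecewiseContinuousOn01 β

/-- Assumption (ND), extended to `[0,∞)`. -/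
structure NDIci (p β : ℝ → ℝ) (p0 β0 β1 : ℝ) : Prop where
  p_nonneg : ∀ t ∈ Set.Ici (0:ℝ), 0 ≤ p t
  p_le : ∀ t ∈ Set.Ici (0:ℝ), p t ≤ p0
  p0_lt_one : p0 < 1
  β_lb : ∀ t ∈ Set.Ici (0:ℝ), β0 ≤ β t
  β_ub : ∀ t ∈ Set.Ici (0:ℝ), β t ≤ β1
  β0_pos : 0 < β0
  p_pc : PiecewiseContinuousOnIci p
  β_pc : PiecewiseContinuousOnIci β

/-- The limiting initial data `(c_i)`, `c = Σ_i c_i`, `c̃ = Σ_i i c_i` of assumption (LIM). -/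
structure LIMc (c : ℕ → ℝ) (cc ctil : ℝ) : Prop where
  nonneg : ∀ i, 0 ≤ c i
  summable : Summable c
  cc_eq : cc = ∑' i, c i
  mul_summable : Summable (fun i : ℕ => (i : ℝ) * c i)
  ctil_eq : ctil = ∑' i : ℕ, (i : ℝ) * c i

/-- Assumption (LIM) for the array of initial urn configurations `init n i = Z_i^n(0)`. -/
structure LIM (init : ℕ → ℕ → ℕ) (c : ℕ → ℝ) (cc ctil : ℝ) : Prop where
  c_lim : ∀ i, Tendsto (fun n : ℕ => (init n i : ℝ) / n) atTop (𝓝 (c i))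
  ctil_lim : Tendsto (fun n : ℕ => ∑' i : ℕ, (i : ℝ) * (init n i : ℝ) / n) atTop (𝓝 ctil)
  ctil_eq : ctil = ∑' i : ℕ, (i : ℝ) * c i
  mul_summable : Summable (fun i : ℕ => (i : ℝ) * c i)
  c_summable : Summable c
  cc_eq : cc = ∑' i, c i
  finite_support : ∀ n, ∃ K, ∀ k, K ≤ k → init n k = 0

/-- The total-weight normalization `σ(t) = (1+β(t))t + c̃ + cβ(t)`. -/
def sigf (β : ℝ → ℝ) (cc ctil t : ℝ) : ℝ := (1 + β t) * t + ctil + cc * β t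

/-- The truncated initial vector `c^d = (c_0, …, c_d, Σ_{i>d} c_i)`. -/
def cvec (d : ℕ) (c : ℕ → ℝ) : Fin (d+2) → ℝ :=
  fun i => if (i : ℕ) ≤ d then c i else ∑' k : ℕ, c (k + (d+1))

/-- View a vector in `ℝ^{d+2}` as an `ℕ`-indexed sequence (zero for large indices). -/
def toN {d : ℕ} (g : Fin (d+2) → ℝ) : ℕ → ℝ := fun i => if h : i < d+2 then g ⟨i, h⟩ else 0

/-- `ℕ`-indexed version of `c^d`. -/
def cvecN (d : ℕ) (c : ℕ → ℝ) : ℕ → ℝ := toN (cvec d c)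

/-- Extension of a path on `[0,1]` to all of `ℝ` (constant outside `[0,1]`). -/
def pext {d : ℕ} (φ : C(I01, Fin (d+2) → ℝ)) : ℝ → Fin (d+2) → ℝ :=
  fun t => φ (Set.projIcc 0 1 zero_le_one t)

/-- Coordinatewise derivative of a path. -/
def pderivC {d : ℕ} (φ : C(I01, Fin (d+2) → ℝ)) (t : ℝ) (i : Fin (d+2)) : ℝ :=
  deriv (fun s => pext φ s i) t

def xofN {d : ℕ} (φ : C(I01, Fin (d+2) → ℝ)) (t : ℝ) : ℕ → ℝ := toN (pext φ t)

def vofN {d : ℕ} (φ : C(I01, Fin (d+2) → ℝ)) (t : ℝ) : ℕ → ℝ := toN (fun i => pderivC φ t i)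

/-! ## The rate function integrand, with the conventions `0·log 0 = 0/0 = 0`, `1/0 = ∞` -/

/-- `a log(a/b)` as an extended real, with the conventions `0 log 0 = 0·(0/0) = 0` and
`a log(a/0) = ∞` for `a ≠ 0`. -/
def entTerm (a b : ℝ) : EReal :=
  if a = 0 then (0 : EReal) else if b ≤ 0 then (⊤ : EReal)
  else ((a * Real.log (a / b) : ℝ) : EReal)

/-- `1 - [v]_i`, the numerator attached to the increment `f_i`. -/
def numA (v : ℕ → ℝ) (i : ℕ) : ℝ := 1 - ∑ l ∈ Finset.range (i+1), v l

/-- `1 - Σ_{i=0}^d (1-[v]_i)`, the numerator attached to the increment `f_{d+1}`. -/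
def numALast (v : ℕ → ℝ) (d : ℕ) : ℝ := 1 - ∑ i ∈ Finset.range (d+1), numA v i

/-- The natural increment probabilities `u_i`, `0 ≤ i ≤ d`. -/
def denB (p β : ℝ → ℝ) (cc ctil : ℝ) (t : ℝ) (x : ℕ → ℝ) (i : ℕ) : ℝ :=
  if i = 0 then p t + (1 - p t) * (β t * x 0 / sigf β cc ctil t)
  else (1 - p t) * (((i : ℝ) + β t) * x i / sigf β cc ctil t)

/-- The natural increment probability `u_{d+1}`. -/
def denBLast (p β : ℝ → ℝ) (cc ctil : ℝ) (t : ℝ) (x : ℕ → ℝ) (d : ℕ) : ℝ :=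
  (1 - p t) * (1 - (∑ i ∈ Finset.range (d+1), ((i : ℝ) + β t) * x i) / sigf β cc ctil t)

/-- The relative-entropy integrand `L_d(t, x, ẋ)` of the rate function `I_d`. -/
def LdE (p β : ℝ → ℝ) (cc ctil : ℝ) (d : ℕ) (t : ℝ) (x v : ℕ → ℝ) : EReal :=
  (∑ i ∈ Finset.range (d+1), entTerm (numA v i) (denB p β cc ctil t x i))
    + entTerm (numALast v d) (denBLast p β cc ctil t x d)

/-- The set `Γ_d` of admissible paths. -/
def Gamma (d : ℕ) (c : ℕ → ℝ) : Set (C(I01, Fin (d+2) → ℝ)) :=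
  {φ | (∀ i, φ pt0 i = cvec d c i)
    ∧ (∀ (t : I01) (i : Fin (d+2)), 0 ≤ φ t i)
    ∧ (∀ i : Fin (d+2), LipschitzWith 1 (fun t : ℝ => pext φ t i))
    ∧ (∀ᵐ t ∂(volume.restrict (Set.Icc (0:ℝ) 1)),
        (∀ i ≤ d, 0 ≤ ∑ l ∈ Finset.range (i+1), vofN φ t l
            ∧ ∑ l ∈ Finset.range (i+1), vofN φ t l ≤ 1)
        ∧ (∑ i ∈ Finset.range (d+2), vofN φ t i = 1)
        ∧ (∑ i ∈ Finset.range (d+2), (i : ℝ) * vofN φ t i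
            = ∑ i ∈ Finset.range (d+1), numA (vofN φ t) i)
        ∧ ∑ i ∈ Finset.range (d+1), numA (vofN φ t) i ≤ 1)}

/-- Extended reals to `[0,∞]`, sending `⊤` to `⊤` and negatives to `0`. -/
def erealToENNReal (x : EReal) : ℝ≥0∞ := if x = ⊤ then ⊤ else ENNReal.ofReal x.toReal

/-- The finite-dimensional rate function `I_d`. -/
def Irate (p β : ℝ → ℝ) (c : ℕ → ℝ) (cc ctil : ℝ) (d : ℕ)
    (φ : C(I01, Fin (d+2) → ℝ)) : ℝ≥0∞ :=
  if φ ∈ Gamma d c then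
    ∫⁻ t in Set.Icc (0:ℝ) 1, erealToENNReal (LdE p β cc ctil d t (xofN φ t) (vofN φ t))
  else ⊤

/-- The large deviation principle with rate `n` and good rate function `I`:
compact level sets, upper bound over closed sets, lower bound over open sets. -/
def IsLDP {Ω : Type*} [MeasurableSpace Ω] {Y : Type*} [TopologicalSpace Y]
    (μ : Measure Ω) (Xn : ℕ → Ω → Y) (I : Y → ℝ≥0∞) : Prop :=
  (∀ M : ℝ≥0∞, M ≠ ⊤ → IsCompact {x | I x ≤ M})
  ∧ (∀ F : Set Y, IsClosed F →
      Filter.limsup (fun n : ℕ => ((Real.log ((μ ((Xn n) ⁻¹' F)).toReal) / n : ℝ) : EReal))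
          Filter.atTop ≤ -((⨅ x ∈ F, I x : ℝ≥0∞) : EReal))
  ∧ (∀ G : Set Y, IsOpen G →
      -((⨅ x ∈ G, I x : ℝ≥0∞) : EReal)
        ≤ Filter.liminf (fun n : ℕ => ((Real.log ((μ ((Xn n) ⁻¹' G)).toReal) / n : ℝ) : EReal))
            Filter.atTop)

/-- Convexity of an `[0,∞]`-valued rate function. -/
def ConvexRate {Y : Type*} [AddCommMonoid Y] [Module ℝ Y] (I : Y → ℝ≥0∞) : Prop :=
  ∀ x y : Y, ∀ a b : ℝ, 0 ≤ a → 0 ≤ b → a + b = 1 →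
    I (a • x + b • y) ≤ ENNReal.ofReal a * I x + ENNReal.ofReal b * I y

/-- The `L¹` norm on `ℝ^{d+2}`. -/
def l1norm {d : ℕ} (v : Fin (d+2) → ℝ) : ℝ := ∑ i, |v i|

/-! ## The time-dependent preferential attachment urn process -/

/-- Effect of the increment `f_i` on an urn configuration `z` (`z k` = number of urns
with exactly `k` balls): for `i = 0` a ball enters an urn of size `0` (or the new urn);
for `i ≥ 1` a new empty urn is created and an urn of size `i` becomes one of size `i+1`. -/
def applyF (i : ℕ) (z : ℕ → ℕ) : ℕ → ℕ :=
  if i = 0 then Function.update z 1 (z 1 + 1)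
  else fun k => if k = 0 then z 0 + 1 else if k = i then z i - 1
    else if k = i + 1 then z (i+1) + 1 else z k

/-- Total weight `Σ_k (k + β) z_k` of a configuration. -/
def urnWeight (βv : ℝ) (z : ℕ → ℕ) : ℝ := ∑' k : ℕ, ((k : ℝ) + βv) * (z k : ℝ)

/-- One-step transition probability of the urn scheme from `z` to `z'`. -/
def stepProb (pv βv : ℝ) (z z' : ℕ → ℕ) : ℝ :=
  ∑' i : ℕ,
    if z' = applyF i z then
      (if i = 0 then pv + (1 - pv) * (βv * (z 0 : ℝ) / urnWeight βv z)
       else (1 - pv) * (((i : ℝ) + βv) * (z i : ℝ) / urnWeight βv z))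
    else 0

/-- `Z n j ω k` is the number of urns with `k` balls at step `j` in the `n`-th row; the law
of each row is that of the time-dependent preferential attachment urn Markov chain. -/
def UrnLaw {Ω : Type*} [MeasurableSpace Ω] (μ : Measure Ω) (p β : ℝ → ℝ)
    (init : ℕ → ℕ → ℕ) (Z : ℕ → ℕ → Ω → ℕ → ℕ) : Prop :=
  (∀ n ω, Z n 0 ω = init n) ∧
  ∀ n : ℕ, 1 ≤ n → ∀ traj : ℕ → ℕ → ℕ, traj 0 = init n →
    μ {ω | ∀ j ≤ n, Z n j ω = traj j}
      = ENNReal.ofReal (∏ j ∈ Finset.range n,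
          stepProb (p ((j : ℝ) / n)) (β ((j : ℝ) / n)) (traj j) (traj (j+1)))

/-- Truncated degree vector `(Z_0, …, Z_d, Z̄_{d+1})` of a configuration. -/
def Ztrunc (d : ℕ) (z : ℕ → ℕ) : Fin (d+2) → ℝ :=
  fun i => if (i : ℕ) ≤ d then (z i : ℝ) else ∑' k : ℕ, (z (k + (d+1)) : ℝ)

/-- `X n` is the path `X^{n,d}`, the linear interpolation of `(1/n) Z^{n,d}(⌊nt⌋)`. -/
def InterpD {Ω : Type*} (d : ℕ) (Z : ℕ → ℕ → Ω → ℕ → ℕ)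
    (X : ℕ → Ω → C(I01, Fin (d+2) → ℝ)) : Prop :=
  ∀ n : ℕ, 1 ≤ n → ∀ ω (t : I01) (i : Fin (d+2)),
    X n ω t i
      = (1 - ((n : ℝ) * (t : ℝ) - (⌊(n : ℝ) * (t : ℝ)⌋₊ : ℝ)))
          * Ztrunc d (Z n ⌊(n : ℝ) * (t : ℝ)⌋₊ ω) i / n
        + ((n : ℝ) * (t : ℝ) - (⌊(n : ℝ) * (t : ℝ)⌋₊ : ℝ))
          * Ztrunc d (Z n (⌊(n : ℝ) * (t : ℝ)⌋₊ + 1) ω) i / n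

/-- `X n` is the path `X^{n,∞}`, the linear interpolation of `(1/n) Z^{n,∞}(⌊nt⌋)`. -/
def InterpInf {Ω : Type*} (Z : ℕ → ℕ → Ω → ℕ → ℕ)
    (X : ℕ → Ω → ∀ _ : ℕ, C(I01, ℝ)) : Prop :=
  ∀ n : ℕ, 1 ≤ n → ∀ ω (i : ℕ) (t : I01),
    X n ω i t
      = (1 - ((n : ℝ) * (t : ℝ) - (⌊(n : ℝ) * (t : ℝ)⌋₊ : ℝ)))
          * (Z n ⌊(n : ℝ) * (t : ℝ)⌋₊ ω i : ℝ) / n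
        + ((n : ℝ) * (t : ℝ) - (⌊(n : ℝ) * (t : ℝ)⌋₊ : ℝ))
          * (Z n (⌊(n : ℝ) * (t : ℝ)⌋₊ + 1) ω i : ℝ) / n

/-! ## The infinite-dimensional rate function -/

def extOne (f : C(I01, ℝ)) : ℝ → ℝ := fun t => f (Set.projIcc 0 1 zero_le_one t)

def xofInf (ξ : ∀ _ : ℕ, C(I01, ℝ)) (t : ℝ) : ℕ → ℝ := fun i => extOne (ξ i) t

def vofInf (ξ : ∀ _ : ℕ, C(I01, ℝ)) (t : ℝ) : ℕ → ℝ := fun i => deriv (extOne (ξ i)) t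

/-- The set `Γ^∞` of admissible infinite-dimensional paths. -/
def GammaInf (c : ℕ → ℝ) : Set (∀ _ : ℕ, C(I01, ℝ)) :=
  {ξ | (∀ i, ξ i pt0 = c i)
    ∧ (∀ i (t : I01), 0 ≤ ξ i t)
    ∧ (∀ i, LipschitzWith 1 (extOne (ξ i)))
    ∧ (∀ t : I01, Summable (fun i => ξ i t))
    ∧ (∀ᵐ t ∂(volume.restrict (Set.Icc (0:ℝ) 1)),
        (∀ i : ℕ, 0 ≤ ∑ l ∈ Finset.range (i+1), vofInf ξ t l
            ∧ ∑ l ∈ Finset.range (i+1), vofInf ξ t l ≤ 1)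
        ∧ HasDerivAt (fun s : ℝ => ∑' i, extOne (ξ i) s) 1 t
        ∧ Summable (fun i => numA (vofInf ξ t) i)
        ∧ ∑' i, numA (vofInf ξ t) i ≤ 1)}

/-- The infinite-dimensional rate function `I^∞`. -/
def IrateInf (p β : ℝ → ℝ) (c : ℕ → ℝ) (cc ctil : ℝ) (ξ : ∀ _ : ℕ, C(I01, ℝ)) : ℝ≥0∞ :=
  if ξ ∈ GammaInf c then
    ∫⁻ t in Set.Icc (0:ℝ) 1,
      ⨆ d : ℕ, erealToENNReal (LdE p β cc ctil d t (xofInf ξ t) (vofInf ξ t))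
  else ⊤

/-! ## Projective limit setting -/

/-- The truncation `p_{ij} : ℝ^{j+2} → ℝ^{i+2}`, `(x_0,…,x_{j+1}) ↦ (x_0,…,x_i, Σ_{l>i} x_l)`. -/
def truncMap (i j : ℕ) (_hij : i ≤ j) : (Fin (j+2) → ℝ) → (Fin (i+2) → ℝ) :=
  fun x k =>
    if (k : ℕ) ≤ i then x (Fin.castLE (by omega) k)
    else ∑ l : Fin (j+2), if i + 1 ≤ (l : ℕ) then x l else 0

lemma truncMap_continuous (i j : ℕ) (hij : i ≤ j) : Continuous (truncMap i j hij) := by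
  apply continuous_pi
  intro k
  show Continuous fun x : Fin (j+2) → ℝ => truncMap i j hij x k
  by_cases h : (k : ℕ) ≤ i
  · simp only [truncMap, if_pos h]
    exact continuous_apply _
  · simp only [truncMap, if_neg h]
    apply continuous_finset_sum
    intro l _
    by_cases hl : i + 1 ≤ (l : ℕ)
    · simp only [if_pos hl]; exact continuous_apply _
    · simp only [if_neg hl]; exact continuous_const

/-- The projection `p_{ij} : 𝒴_j → 𝒴_i` on path spaces. -/
def projMapC (i j : ℕ) (hij : i ≤ j) (φ : C(I01, Fin (j+2) → ℝ)) : C(I01, Fin (i+2) → ℝ) :=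
  ⟨fun t => truncMap i j hij (φ t), (truncMap_continuous i j hij).comp φ.continuous⟩

/-- The projective limit `lim← 𝒴_j ⊆ Π_j 𝒴_j`. -/
def ProjLim : Set (∀ j : ℕ, C(I01, Fin (j+2) → ℝ)) :=
  {x | ∀ (i j : ℕ) (hij : i ≤ j), projMapC i j hij (x j) = x i}

/-- `Γ* ⊆ lim← 𝒴_j`: compatible families with all coordinates admissible. -/
def GammaStar (c : ℕ → ℝ) : Set (∀ j : ℕ, C(I01, Fin (j+2) → ℝ)) :=
  {x | x ∈ ProjLim ∧ ∀ d, x d ∈ Gamma d c}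

/-- The projective-limit rate function `J^∞(φ) = sup_d I_d(p_d φ)`. -/
def Jinf (p β : ℝ → ℝ) (c : ℕ → ℝ) (cc ctil : ℝ)
    (x : ∀ j : ℕ, C(I01, Fin (j+2) → ℝ)) : ℝ≥0∞ :=
  if x ∈ ProjLim then ⨆ d : ℕ, Irate p β c cc ctil d (x d) else ⊤

/-! ## Carathéodory solutions of the LLN ODE systems -/

/-- A Carathéodory solution on `[0,T]` of `ẋ = F(t,x)`, `x(0) = x₀`, in coordinates `≤ N`
(equivalently, a solution of the associated integral equation). -/
def IsCaraSol (F : ℝ → (ℕ → ℝ) → ℕ → ℝ) (x0 : ℕ → ℝ) (N : ℕ) (T : ℝ) (f : ℝ → ℕ → ℝ) : Prop :=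
  ∀ i ≤ N, IntervalIntegrable (fun s => F s (f s) i) volume 0 T ∧
    ∀ t ∈ Set.Icc (0:ℝ) T, f t i = x0 i + ∫ s in (0:ℝ)..t, F s (f s) i

/-- A Carathéodory solution on `[0,∞)`. -/
def IsCaraSolIci (F : ℝ → (ℕ → ℝ) → ℕ → ℝ) (x0 : ℕ → ℝ) (N : ℕ) (f : ℝ → ℕ → ℝ) : Prop :=
  ∀ i ≤ N, (∀ T > (0:ℝ), IntervalIntegrable (fun s => F s (f s) i) volume 0 T) ∧
    ∀ t ∈ Set.Ici (0:ℝ), f t i = x0 i + ∫ s in (0:ℝ)..t, F s (f s) i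

/-- The vector field of the LLN ODE system, coordinates `i ≥ 0`. -/
def LLNfield0 (p β : ℝ → ℝ) (cc ctil : ℝ) (t : ℝ) (x : ℕ → ℝ) : ℕ → ℝ := fun i =>
  if i = 0 then 1 - p t - (1 - p t) * (β t * x 0 / sigf β cc ctil t)
  else (if i = 1 then p t else 0)
    + (1 - p t) * ((((i : ℝ) - 1) + β t) * x (i-1) / sigf β cc ctil t)
    - (1 - p t) * (((i : ℝ) + β t) * x i / sigf β cc ctil t)

/-- The vector field of the `d`-dimensional LLN ODE system (with the last coordinate
`φ̇_{d+1} = 1 - Σ_{i≤d} φ̇_i`). -/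
def LLNfield (p β : ℝ → ℝ) (cc ctil : ℝ) (d : ℕ) (t : ℝ) (x : ℕ → ℝ) : ℕ → ℝ := fun i =>
  if i ≤ d then LLNfield0 p β cc ctil t x i
  else if i = d + 1 then 1 - ∑ l ∈ Finset.range (d+1), LLNfield0 p β cc ctil t x l
  else 0

/-- Truncation of an infinite family `ζ` to the `d`-dimensional path
`(ζ_0, …, ζ_d, ζ̄_{d+1})` with `ζ̄_{d+1}(t) = t + c - Σ_{i≤d} ζ_i(t)`. -/
def truncSol (d : ℕ) (cc : ℝ) (ζ : ℕ → ℝ → ℝ) : ℝ → ℕ → ℝ := fun t i =>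
  if i ≤ d then ζ i t
  else if i = d + 1 then t + cc - ∑ l ∈ Finset.range (d+1), ζ l t
  else 0

/-- The integrating factor `M_i(s,t) = exp[-∫_s^t (1-p(u))(i+β(u))/σ(u) du]`. -/
def Mfac (p β : ℝ → ℝ) (cc ctil : ℝ) (i : ℕ) (s t : ℝ) : ℝ :=
  Real.exp (-(∫ u in s..t, (1 - p u) * (((i : ℝ) + β u) / sigf β cc ctil u)))

/-- The explicit solution formulas of the LLN ODE system. -/
def zetaExpl (p β : ℝ → ℝ) (cc ctil : ℝ) (c : ℕ → ℝ) : ℕ → ℝ → ℝ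
  | 0 => fun t => c 0 * Mfac p β cc ctil 0 0 t
      + ∫ s in (0:ℝ)..t, (1 - p s) * Mfac p β cc ctil 0 s t
  | (i+1) => fun t => c (i+1) * Mfac p β cc ctil (i+1) 0 t
      + ∫ s in (0:ℝ)..t,
          ((if i = 0 then p s else 0)
            + (1 - p s) * (((i : ℝ) + β s) * zetaExpl p β cc ctil c i s / sigf β cc ctil s))
          * Mfac p β cc ctil (i+1) s t

/-- The scalar field `G(t,x)` of the comparison ODE. -/
def Gfield (p β : ℝ → ℝ) (cc ctil : ℝ) (t x : ℝ) : ℝ :=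
  p t + (1 - p t) * ((x + β t * (t + cc)) / sigf β cc ctil t)

/-- A scalar Carathéodory solution on `[0,∞)`. -/
def IsCaraScalIci (G : ℝ → ℝ → ℝ) (x0 : ℝ) (f : ℝ → ℝ) : Prop :=
  (∀ T > (0:ℝ), IntervalIntegrable (fun s => G s (f s)) volume 0 T) ∧
    ∀ t ∈ Set.Ici (0:ℝ), f t = x0 + ∫ s in (0:ℝ)..t, G s (f s)

/-- The vector field of the comparison system `O(o₁,o₂,o₃,o₄,o₅)` (coordinates `0 ≤ i ≤ d`). -/
def OField (o1 o2 o3 o4 o5 : ℝ) (d : ℕ) (t : ℝ) (x : ℕ → ℝ) : ℕ → ℝ := fun i =>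
  if i = 0 then 1 - o1 - (1 - o2) * (o3 / (1 + o4)) * (x 0 / (t + o5))
  else if i ≤ d then
    (if i = 1 then o1 else 0)
      + (1 - o2) / (1 + o4) * (((((i : ℝ) - 1) + o3) * x (i-1) - ((i : ℝ) + o3) * x i) / (t + o5))
  else 0

/-! ## Constructions for the lower bound -/

/-- Convex combination `φ_θ = (1-θ)φ* + θℓ`. -/
def phiMix {d : ℕ} (θ : ℝ) (φstar ℓC : C(I01, Fin (d+2) → ℝ)) : C(I01, Fin (d+2) → ℝ) :=
  (1 - θ) • φstar + θ • ℓC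

/-- Block time-average `γ_κ` of the derivative of `φ` on the `κ`-block partition of `[0,1]`
(with `γ_κ(1) = γ_κ(1 - 1/κ)`). -/
def blockAvg {d : ℕ} (φ : C(I01, Fin (d+2) → ℝ)) (κ : ℕ) (t : ℝ) (i : Fin (d+2)) : ℝ :=
  (κ : ℝ) * ∫ s in (((min ⌊t * κ⌋₊ (κ-1) : ℕ) : ℝ)/κ)..((((min ⌊t * κ⌋₊ (κ-1) : ℕ) : ℝ) + 1)/κ),
      pderivC φ s i

/-- The regularized path `ψ_κ(t) = c^d + ∫_0^t γ_κ(s) ds`. -/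
def psiKappa {d : ℕ} (φ : C(I01, Fin (d+2) → ℝ)) (κ : ℕ) (c : ℕ → ℝ) (t : ℝ)
    (i : Fin (d+2)) : ℝ :=
  cvec d c i + ∫ s in (0:ℝ)..t, blockAvg φ κ s i

/-- The increment vectors `f_0, …, f_{d+1}` of the truncated chain. -/
def fvec (d : ℕ) (i : ℕ) : Fin (d+2) → ℝ := fun k =>
  if i = 0 then (if (k : ℕ) = 1 then 1 else 0)
  else if i ≤ d then
    (if (k : ℕ) = 0 then 1 else 0) + (if (k : ℕ) = i then -1 else 0)
      + (if (k : ℕ) = i + 1 then 1 else 0)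
  else if (k : ℕ) = 0 then 1 else 0

/-- The switching times `t_i = δ - Σ_{l=i}^d (δ + [c^d]_l - [ψ_κ(δ)]_l)`, `t_{d+1} = δ`. -/
def tSwitch {d : ℕ} (ψδ : Fin (d+2) → ℝ) (c : ℕ → ℝ) (δ : ℝ) : ℕ → ℝ := fun i =>
  if i ≤ d then
    δ - ∑ l ∈ Finset.Icc i d,
      (δ + (∑ m ∈ Finset.range (l+1), cvecN d c m) - (∑ m ∈ Finset.range (l+1), toN ψδ m))
  else δ

/-- The modified step derivative `γ*`: increment `f_{d+1}` on `[0,t_0)`, `f_i` on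
`[t_i, t_{i+1})` before time `δ`, and `γ_κ` from `δ` on. -/
def gammaStar {d : ℕ} (g : ℝ → Fin (d+2) → ℝ) (ts : ℕ → ℝ) (δ : ℝ) (t : ℝ) :
    Fin (d+2) → ℝ :=
  if δ ≤ t then g t
  else if t < ts 0 then fvec d (d+1)
  else fvec d (sSup {i : ℕ | i ≤ d ∧ ts i ≤ t})

def tSwitchFull {d : ℕ} (φstar ℓC : C(I01, Fin (d+2) → ℝ)) (θ : ℝ) (κ : ℕ) (c : ℕ → ℝ)
    (δ : ℝ) : ℕ → ℝ :=
  tSwitch (fun i => psiKappa (phiMix θ φstar ℓC) κ c δ i) c δ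

/-- `ψ̇* = γ*` built from the data `φ*, ℓ, θ, κ, δ`. -/
def gammaStarFull {d : ℕ} (φstar ℓC : C(I01, Fin (d+2) → ℝ)) (θ : ℝ) (κ : ℕ) (c : ℕ → ℝ)
    (δ : ℝ) : ℝ → Fin (d+2) → ℝ :=
  gammaStar (fun t => blockAvg (phiMix θ φstar ℓC) κ t) (tSwitchFull φstar ℓC θ κ c δ) δ

/-- The modified path `ψ*(t) = c^d + ∫_0^t γ*(s) ds`. -/
def psiStarFull {d : ℕ} (φstar ℓC : C(I01, Fin (d+2) → ℝ)) (θ : ℝ) (κ : ℕ) (c : ℕ → ℝ)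
    (δ : ℝ) (t : ℝ) : Fin (d+2) → ℝ :=
  fun i => cvec d c i + ∫ s in (0:ℝ)..t, gammaStarFull φstar ℓC θ κ c δ s i

/-! ## The controlled chain of the lower bound -/

/-- Mean of the control at step `l`: `ψ̇*(l/n)` if `l ≤ ⌊δn⌋`, or if `l ≥ ⌈δn⌉` and the
state is above the threshold; otherwise the mean `ρm l` of the natural increment law. -/
def ctrlMean {d : ℕ} (γs : ℝ → Fin (d+2) → ℝ) (ρm : ℕ → Fin (d+2) → ℝ)
    (Xb : ℕ → Fin (d+2) → ℝ) (c : ℕ → ℝ) (e : Fin (d+2) → ℝ) (θ δ : ℝ) (n l : ℕ) :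
    Fin (d+2) → ℝ :=
  if l ≤ ⌊δ * (n : ℝ)⌋₊ ∨ (⌈δ * (n : ℝ)⌉₊ ≤ l ∧ ∀ i, (θ/4) * (e i * δ + cvec d c i) ≤ Xb l i)
  then γs ((l : ℝ) / n) else ρm l

/-- The martingale `M^n(j) = X̄^n(j) - (1/n) Σ_{l<j} Ē(Ȳ^n(l) | X̄^n(l)) - c^d`. -/
def ctrlMart {d : ℕ} (γs : ℝ → Fin (d+2) → ℝ) (ρm : ℕ → Fin (d+2) → ℝ)
    (Xb : ℕ → Fin (d+2) → ℝ) (c : ℕ → ℝ) (e : Fin (d+2) → ℝ) (θ δ : ℝ) (n j : ℕ) :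
    Fin (d+2) → ℝ :=
  fun i => Xb j i - (1/(n:ℝ)) * ∑ l ∈ Finset.range j, ctrlMean γs ρm Xb c e θ δ n l i
    - cvec d c i

/-- The stopping time `τ_n = n ∧ min{⌈δn⌉ ≤ l ≤ n : X̄_i^n(l) < (θ/4)(e_i δ + c_i), some i}`. -/
def stopTau {d : ℕ} (Xb : ℕ → Fin (d+2) → ℝ) (c : ℕ → ℝ) (e : Fin (d+2) → ℝ)
    (θ δ : ℝ) (n : ℕ) : ℕ :=
  sInf ({n} ∪ {l : ℕ | ⌈δ * (n : ℝ)⌉₊ ≤ l ∧ l ≤ n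
    ∧ ∃ i, Xb l i < (θ/4) * (e i * δ + cvec d c i)})

open scoped NNReal

/-!
By Borel–Cantelli, the bound `P(sup_j |M^n(j ∧ τ_n)| > r_n) ≤ C n^{-3/2}`, where
`r_n = θ e_{d+1} / (4 n^{1/8})`, gives almost surely `|M^n(j ∧ τ_n)| ≤ r_n` for all `j ≤ n` and
all large `n`. On that event the stopping time never fires: at `τ_n` the chain is within `r_n`
of `c^d + (1/n) Σ_{l<τ_n} ψ̇*(l/n)`, which is at least `(θ/2)(e_i τ_n/n + c_i)`, and for large
`n` this stays above the threshold `(θ/4)(e_i δ + c_i)`. Hence `τ_n = n`, the control is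
`ψ̇*(l/n)` at every step, and `X̄^n(j) - c^d - (1/n) Σ_{l<j} ψ̇*(l/n) = M^n(j)` is at most `r_n`.

For the paths: `ψ̇*` is bounded by `1` and piecewise constant with finitely many jumps, so its
Riemann sums are within `O(1/n)` of `ψ*(j/n)`, and the linear interpolation of a sequence that is
uniformly close to the `1`-Lipschitz path `ψ*` on the grid is uniformly close to `ψ*`.
-/

theorem abs_integral_le_of_abs_le {g : ℝ → ℝ} {M : ℝ} (hg : ∀ s, |g s| ≤ M) (a b : ℝ) :
    |∫ s in a..b, g s| ≤ M * |b - a| := by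
  simpa using intervalIntegral.norm_integral_le_of_norm_le_const (a := a) (b := b) (f := g)
    (C := M) fun s _ => by simpa using hg s

theorem lipschitzWith_one_integral {g : ℝ → ℝ} (hg : ∀ s, |g s| ≤ 1)
    (hint : ∀ a b, IntervalIntegrable g volume a b) (a : ℝ) :
    LipschitzWith 1 fun t => ∫ s in a..t, g s := by
  refine LipschitzWith.of_dist_le_mul fun x y => ?_
  rw [Real.dist_eq, Real.dist_eq, intervalIntegral.integral_interval_sub_left (hint a x) (hint a y),
    NNReal.coe_one]
  exact abs_integral_le_of_abs_le hg y x

theorem Nat.ceil_mul_eq_of_mem_Ioc {n : ℕ} (hn : 0 < n) {l : ℕ} {b : ℝ}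
    (hb : b ∈ Ioc ((l : ℝ) / n) ((l + 1) / n)) : ⌈b * (n : ℝ)⌉₊ = l + 1 := by
  have hn' : (0 : ℝ) < n := Nat.cast_pos.2 hn
  rw [Nat.ceil_eq_iff l.succ_ne_zero, Nat.succ_sub_one]
  push_cast
  constructor
  · exact (div_lt_iff₀ hn').1 hb.1
  · exact (le_div_iff₀ hn').1 hb.2

theorem integral_eq_of_forall_notMem_Ioc {g : ℝ → ℝ} {B : Finset ℝ}
    (hconst : ∀ s u, s ≤ u → (∀ b ∈ B, b ∉ Ioc s u) → g s = g u) {a b : ℝ} (hab : a ≤ b)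
    (hfree : ∀ x ∈ B, x ∉ Ioc a b) : ∫ s in a..b, g s = (b - a) * g a := by
  rw [← smul_eq_mul, ← intervalIntegral.integral_const]
  refine intervalIntegral.integral_congr fun s hs => ?_
  rw [uIcc_of_le hab] at hs
  exact (hconst _ _ hs.1 fun x hx hxI => hfree x hx ⟨hxI.1, hxI.2.trans hs.2⟩).symm

theorem abs_riemannSum_sub_integral_le {g : ℝ → ℝ} {M : ℝ} (B : Finset ℝ)
    (hg : ∀ s, |g s| ≤ M) (hint : ∀ a b, IntervalIntegrable g volume a b)
    (hconst : ∀ s u, s ≤ u → (∀ b ∈ B, b ∉ Ioc s u) → g s = g u)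
    {n : ℕ} (hn : 0 < n) (j : ℕ) :
    |(1 / n : ℝ) * ∑ l ∈ Finset.range j, g (l / n) - ∫ s in (0 : ℝ)..j / n, g s|
      ≤ 2 * M * B.card / n := by
  have hn' : (0 : ℝ) < n := Nat.cast_pos.2 hn
  have hM : 0 ≤ M := (abs_nonneg _).trans (hg 0)
  set T : ℕ → ℝ := fun l => 1 / n * g (l / n) - ∫ s in (l : ℝ) / n..(l + 1) / n, g s
  have hwidth : ∀ l : ℕ, ((l : ℝ) + 1) / n - l / n = 1 / n := fun l => by field_simp; ring
  have hsplit : ∫ s in (0 : ℝ)..j / n, g s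
      = ∑ l ∈ Finset.range j, ∫ s in (l : ℝ) / n..(l + 1) / n, g s := by
    have := intervalIntegral.sum_integral_adjacent_intervals (a := fun k : ℕ => (k : ℝ) / n)
      (f := g) (μ := volume) (n := j) fun k _ => hint _ _
    push_cast at this
    simpa using this.symm
  have hT : ∀ l, |T l| ≤ 2 * M / n := fun l => by
    have h1 : |1 / (n : ℝ) * g (l / n)| ≤ M / n := by
      rw [abs_mul, abs_of_pos (by positivity)]
      calc 1 / (n : ℝ) * |g (l / n)| ≤ 1 / n * M := by gcongr; exact hg _
        _ = M / n := by ring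
    have h2 := abs_integral_le_of_abs_le hg ((l : ℝ) / n) ((l + 1) / n)
    rw [hwidth, abs_of_pos (by positivity : (0 : ℝ) < 1 / n)] at h2
    calc |T l| ≤ _ := abs_sub _ _
      _ ≤ M / n + M * (1 / n) := add_le_add h1 h2
      _ = 2 * M / n := by ring
  -- `T l` vanishes unless a breakpoint `b` lies in `(l/n, (l+1)/n]`, and then `l = ⌈b n⌉₊ - 1`.
  have hsupp : ∀ l, T l ≠ 0 → l ∈ B.image fun b : ℝ => ⌈b * n⌉₊ - 1 := by
    intro l hTl
    by_contra hl
    simp only [Finset.mem_image, not_exists, not_and] at hl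
    refine hTl ?_
    simp only [T]
    rw [integral_eq_of_forall_notMem_Ioc hconst (by gcongr; linarith) fun b hb hbI =>
      hl b hb (by rw [Nat.ceil_mul_eq_of_mem_Ioc hn hbI]; rfl), hwidth]
    ring
  rw [hsplit, Finset.mul_sum, ← Finset.sum_sub_distrib]
  calc |∑ l ∈ Finset.range j, T l| ≤ ∑ l ∈ Finset.range j, |T l| :=
        Finset.abs_sum_le_sum_abs _ _
    _ = ∑ l ∈ Finset.range j with T l ≠ 0, |T l| := by
        rw [Finset.sum_filter_of_ne]
        intro l _ h h0
        exact h (by rw [h0, abs_zero])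
    _ ≤ ∑ l ∈ B.image (fun b : ℝ => ⌈b * n⌉₊ - 1), |T l| :=
        Finset.sum_le_sum_of_subset_of_nonneg (fun l hl => hsupp l (Finset.mem_filter.1 hl).2)
          fun _ _ _ => abs_nonneg _
    _ ≤ (B.image fun b : ℝ => ⌈b * n⌉₊ - 1).card • (2 * M / n) :=
        Finset.sum_le_card_nsmul _ _ _ fun l _ => hT l
    _ ≤ B.card • (2 * M / n) := nsmul_le_nsmul_left (by positivity) Finset.card_image_le
    _ = 2 * M * B.card / n := by rw [nsmul_eq_mul]; ring

def lineInterp (x : ℕ → ℝ) (n : ℕ) (t : ℝ) : ℝ :=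
  (1 - ((n : ℝ) * t - ⌊(n : ℝ) * t⌋₊)) * x ⌊(n : ℝ) * t⌋₊
    + ((n : ℝ) * t - ⌊(n : ℝ) * t⌋₊) * x (⌊(n : ℝ) * t⌋₊ + 1)

theorem abs_lineInterp_sub_le {x : ℕ → ℝ} {F : ℝ → ℝ} {η : ℝ} {n : ℕ} (hn : 0 < n)
    (hF : LipschitzWith 1 F) (hx : ∀ j ≤ n, |x j - F (j / n)| ≤ η) {t : ℝ} (ht : t ∈ Icc 0 1) :
    |lineInterp x n t - F t| ≤ η + 1 / n := by
  have hn' : (0 : ℝ) < n := Nat.cast_pos.2 hn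
  set j := ⌊(n : ℝ) * t⌋₊
  set w := (n : ℝ) * t - j
  have hj : (j : ℝ) ≤ n * t := Nat.floor_le (by have := ht.1; positivity)
  have hw1 : w < 1 := by have := Nat.lt_floor_add_one ((n : ℝ) * t); simp only [w]; linarith
  have hw0 : 0 ≤ w := sub_nonneg.2 hj
  have hjn : j ≤ n := Nat.floor_le_of_le (by nlinarith [ht.2])
  have hF' : ∀ s, |F s - F t| ≤ |s - t| := fun s => by
    simpa [Real.dist_eq] using hF.dist_le_mul s t
  have hxj : ∀ k ≤ n, |x k - F t| ≤ η + |(k : ℝ) / n - t| := fun k hk =>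
    (abs_sub_le _ (F (k / n)) _).trans (add_le_add (hx k hk) (hF' _))
  have hdist0 : |(j : ℝ) / n - t| = w / n := by
    have : t - j / n = w / n := by simp only [w]; field_simp
    rw [abs_sub_comm, this, abs_of_nonneg (div_nonneg hw0 hn'.le)]
  have hsplit : lineInterp x n t - F t = (1 - w) * (x j - F t) + w * (x (j + 1) - F t) := by
    simp only [lineInterp]; ring
  rw [hsplit]
  rcases hw0.eq_or_lt with hw | hw
  · rw [← hw, zero_mul, add_zero, sub_zero, one_mul]
    refine (hxj j hjn).trans ?_
    rw [hdist0, ← hw, zero_div]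
    gcongr
    positivity
  have hj1 : j + 1 ≤ n := by
    by_contra h
    have : (j : ℝ) = n := by exact_mod_cast le_antisymm hjn (by omega)
    have : w ≤ 0 := by simp only [w]; nlinarith [ht.2]
    linarith
  have hdist1 : |((j + 1 : ℕ) : ℝ) / n - t| = (1 - w) / n := by
    have : ((j + 1 : ℕ) : ℝ) / n - t = (1 - w) / n := by simp only [w]; push_cast; field_simp; ring
    rw [this, abs_of_nonneg (div_nonneg (by linarith) hn'.le)]
  calc |(1 - w) * (x j - F t) + w * (x (j + 1) - F t)|
      ≤ (1 - w) * |x j - F t| + w * |x (j + 1) - F t| := by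
        refine (abs_add_le _ _).trans_eq ?_
        rw [abs_mul, abs_mul, abs_of_nonneg (by linarith), abs_of_nonneg hw0]
    _ ≤ (1 - w) * (η + w / n) + w * (η + (1 - w) / n) := by
        rw [← hdist0, ← hdist1]
        exact add_le_add (mul_le_mul_of_nonneg_left (hxj j hjn) (by linarith))
          (mul_le_mul_of_nonneg_left (hxj (j + 1) hj1) hw0)
    _ = η + 2 * w * (1 - w) / n := by ring
    _ ≤ η + 1 / n := by gcongr; nlinarith

theorem ae_eventually_notMem_of_measure_le_rpow {Ω : Type*} [MeasurableSpace Ω] {μ : Measure Ω}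
    {s : ℕ → Set Ω} {C q : ℝ} (hq : q < -1)
    (hs : ∀ n : ℕ, 1 ≤ n → μ (s n) ≤ ENNReal.ofReal (C * (n : ℝ) ^ q)) :
    ∀ᵐ ω ∂μ, ∀ᶠ n in atTop, ω ∉ s n := by
  have hsum : ∑' n, μ (s (n + 1)) ≠ ∞ := by
    have hC : Summable fun n : ℕ => C * ((n + 1 : ℕ) : ℝ) ^ q :=
      ((summable_nat_add_iff 1).2 (Real.summable_nat_rpow.2 hq)).mul_left C
    exact ne_top_of_le_ne_top hC.tsum_ofReal_ne_top
      (ENNReal.tsum_le_tsum fun n => hs (n + 1) n.succ_pos)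
  filter_upwards [ae_eventually_notMem hsum] with ω hω
  rw [← Filter.map_add_atTop_eq_nat 1]
  exact eventually_map.2 hω

theorem exists_forall_le_of_eventually_le {ι : Type*} {S : ℕ → Set ι} {f : ℕ → ι → ℝ}
    {a : ℕ → ℝ} (ha : Tendsto a atTop (𝓝 0)) (h : ∀ᶠ n in atTop, ∀ x ∈ S n, f n x ≤ a n) :
    ∀ ε > 0, ∃ N, ∀ n ≥ N, ∀ x ∈ S n, f n x ≤ ε := fun ε hε => by
  obtain ⟨N, hN⟩ := eventually_atTop.1 (h.and (ha.eventually_le_const hε))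
  exact ⟨N, fun n hn x hx => ((hN n hn).1 x hx).trans (hN n hn).2⟩

theorem tendsto_natCast_rpow_atTop {p : ℝ} (hp : 0 < p) :
    Tendsto (fun n : ℕ => (n : ℝ) ^ p) atTop atTop :=
  (tendsto_rpow_atTop hp).comp tendsto_natCast_atTop_atTop

theorem eventually_mul_div_rpow_le {a b c δ p : ℝ} (hc : 0 ≤ c) (ha : 0 ≤ a) (hab : a ≤ b)
    (hδ : 0 < δ) (hp : 0 < p) : ∀ᶠ n : ℕ in atTop, c * a / (4 * (n : ℝ) ^ p) ≤ c / 4 * (b * δ) := by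
  filter_upwards [((tendsto_natCast_rpow_atTop hp).const_mul_atTop hδ).eventually_ge_atTop 1,
    eventually_gt_atTop 0] with n hn hn0
  have : 0 < (n : ℝ) ^ p := by positivity
  rw [div_le_iff₀ (by positivity)]
  nlinarith [mul_le_mul_of_nonneg_left hab hc, mul_nonneg hc ha]

theorem abs_le_l1norm {d : ℕ} (v : Fin (d+2) → ℝ) (i : Fin (d+2)) : |v i| ≤ l1norm v :=
  Finset.single_le_sum (f := fun i => |v i|) (fun j _ => abs_nonneg (v j)) (Finset.mem_univ i)

theorem l1norm_le_of_forall_abs_le {d : ℕ} {v : Fin (d+2) → ℝ} {r : ℝ} (h : ∀ i, |v i| ≤ r) :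
    l1norm v ≤ (d + 2) * r := by
  calc l1norm v ≤ ∑ _i : Fin (d+2), r := Finset.sum_le_sum fun i _ => h i
    _ = (d + 2) * r := by simp

theorem cvec_nonneg {c : ℕ → ℝ} (hc : ∀ k, 0 ≤ c k) (d : ℕ) (i : Fin (d+2)) : 0 ≤ cvec d c i := by
  unfold cvec
  split_ifs
  exacts [hc _, tsum_nonneg fun k => hc _]

theorem pext_phiMix_apply {d : ℕ} (θ : ℝ) (φ ψ : C(I01, Fin (d+2) → ℝ)) (t : ℝ) (i : Fin (d+2)) :
    pext (phiMix θ φ ψ) t i = (1 - θ) * pext φ t i + θ * pext ψ t i := rfl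

theorem lipschitzWith_pext_phiMix {d : ℕ} {K : ℝ≥0} {θ : ℝ} (hθ0 : 0 ≤ θ) (hθ1 : θ ≤ 1)
    {φ ψ : C(I01, Fin (d+2) → ℝ)} {i : Fin (d+2)}
    (hφ : LipschitzWith K fun t => pext φ t i) (hψ : LipschitzWith K fun t => pext ψ t i) :
    LipschitzWith K fun t => pext (phiMix θ φ ψ) t i := by
  refine LipschitzWith.of_dist_le_mul fun x y => ?_
  simp only [pext_phiMix_apply, Real.dist_eq]
  have hφxy : |pext φ x i - pext φ y i| ≤ K * dist x y := by
    simpa [Real.dist_eq] using hφ.dist_le_mul x y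
  have hψxy : |pext ψ x i - pext ψ y i| ≤ K * dist x y := by
    simpa [Real.dist_eq] using hψ.dist_le_mul x y
  calc |(1 - θ) * pext φ x i + θ * pext ψ x i - ((1 - θ) * pext φ y i + θ * pext ψ y i)|
      = |(1 - θ) * (pext φ x i - pext φ y i) + θ * (pext ψ x i - pext ψ y i)| := by ring_nf
    _ ≤ (1 - θ) * |pext φ x i - pext φ y i| + θ * |pext ψ x i - pext ψ y i| := by
        refine (abs_add_le _ _).trans_eq ?_
        rw [abs_mul, abs_mul, abs_of_nonneg (sub_nonneg.2 hθ1), abs_of_nonneg hθ0]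
    _ ≤ (1 - θ) * (K * dist x y) + θ * (K * dist x y) :=
        add_le_add (mul_le_mul_of_nonneg_left hφxy (by linarith))
          (mul_le_mul_of_nonneg_left hψxy hθ0)
    _ = K * dist x y := by ring

theorem lipschitzWith_pext_affine {d : ℕ} {ℓ : C(I01, Fin (d+2) → ℝ)} {i : Fin (d+2)} {a b : ℝ}
    (ha : |a| ≤ 1) (hℓ : ∀ t : I01, ℓ t i = a * t + b) :
    LipschitzWith 1 fun t => pext ℓ t i := by
  refine LipschitzWith.of_dist_le_mul fun x y => ?_
  have hproj := (LipschitzWith.projIcc (zero_le_one' ℝ)).dist_le_mul x y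
  rw [Subtype.dist_eq] at hproj
  simp only [pext, hℓ, Real.dist_eq, NNReal.coe_one, one_mul] at hproj ⊢
  calc |a * (projIcc 0 1 zero_le_one x : ℝ) + b - (a * (projIcc 0 1 zero_le_one y : ℝ) + b)|
      = |a| * |(projIcc 0 1 zero_le_one x : ℝ) - projIcc 0 1 zero_le_one y| := by
        rw [← abs_mul]; ring_nf
    _ ≤ 1 * |x - y| := by gcongr
    _ = _ := one_mul _

theorem abs_blockAvg_le {d : ℕ} {K : ℝ≥0} {φ : C(I01, Fin (d+2) → ℝ)} {i : Fin (d+2)}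
    (hφ : LipschitzWith K fun t => pext φ t i) (κ : ℕ) (t : ℝ) : |blockAvg φ κ t i| ≤ K := by
  rcases κ.eq_zero_or_pos with rfl | hκ
  · simp [blockAvg]
  have hκ' : (0 : ℝ) < κ := Nat.cast_pos.2 hκ
  set m : ℕ := min ⌊t * κ⌋₊ (κ - 1)
  have hderiv : ∀ s, ‖pderivC φ s i‖ ≤ K := fun s => norm_deriv_le_of_lipschitz (𝕜 := ℝ) hφ
  have hint := intervalIntegral.norm_integral_le_of_norm_le_const (a := m / κ) (b := (m + 1) / κ)
    fun s _ => hderiv s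
  have hwidth : ((m : ℝ) + 1) / κ - m / κ = 1 / κ := by field_simp; ring
  rw [hwidth, abs_of_pos (by positivity), Real.norm_eq_abs] at hint
  calc |blockAvg φ κ t i| = κ * |∫ s in (m : ℝ) / κ..(m + 1) / κ, pderivC φ s i| := by
        rw [blockAvg, abs_mul, Nat.abs_cast]
    _ ≤ κ * (K * (1 / κ)) := by gcongr
    _ = K := by field_simp

theorem abs_fvec_le_one (d m : ℕ) (k : Fin (d+2)) : |fvec d m k| ≤ 1 := by
  unfold fvec
  split_ifs <;> first | (exfalso; omega) | norm_num

theorem abs_gammaStar_le_one {d : ℕ} {φ : C(I01, Fin (d+2) → ℝ)} {i : Fin (d+2)}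
    (hφ : LipschitzWith 1 fun t => pext φ t i) (κ : ℕ) (ts : ℕ → ℝ) (δ s : ℝ) :
    |gammaStar (fun t => blockAvg φ κ t) ts δ s i| ≤ 1 := by
  unfold gammaStar
  split_ifs
  · exact_mod_cast abs_blockAvg_le hφ κ s
  · exact abs_fvec_le_one d _ i
  · exact abs_fvec_le_one d _ i

theorem measurable_gammaStar {d : ℕ} (φ : C(I01, Fin (d+2) → ℝ)) (κ : ℕ) (ts : ℕ → ℝ) (δ : ℝ)
    (i : Fin (d+2)) : Measurable fun s => gammaStar (fun t => blockAvg φ κ t) ts δ s i := by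
  have hblock : Monotone fun s : ℝ => min ⌊s * κ⌋₊ (κ - 1) := fun a b hab =>
    min_le_min_right _ (Nat.floor_mono (by gcongr))
  have hswitch : Monotone fun s : ℝ => sSup {l : ℕ | l ≤ d ∧ ts l ≤ s} := fun a b hab =>
    csSup_le_csSup' ⟨d, fun _ hl => hl.1⟩ fun l hl => ⟨hl.1, hl.2.trans hab⟩
  have hF : ∀ F : ℕ → ℝ, ∀ {f : ℝ → ℕ}, Monotone f → Measurable fun s => F (f s) :=
    fun F f hf => measurable_from_top.comp hf.measurable
  unfold gammaStar blockAvg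
  simp only [apply_ite (fun v : Fin (d+2) → ℝ => v i)]
  exact (hF (fun m => κ * ∫ s in (m : ℝ) / κ..(m + 1) / κ, pderivC φ s i) hblock).ite
    measurableSet_Ici (measurable_const.ite measurableSet_Iio (hF (fun m => fvec d m i) hswitch))

theorem intervalIntegrable_gammaStar {d : ℕ} {φ : C(I01, Fin (d+2) → ℝ)} {i : Fin (d+2)}
    (hφ : LipschitzWith 1 fun t => pext φ t i) (κ : ℕ) (ts : ℕ → ℝ) (δ a b : ℝ) :
    IntervalIntegrable (fun s => gammaStar (fun t => blockAvg φ κ t) ts δ s i) volume a b :=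
  (intervalIntegrable_const (c := (1 : ℝ))).mono_fun'
    (measurable_gammaStar φ κ ts δ i).aestronglyMeasurable
    (ae_of_all _ fun s => (Real.norm_eq_abs _).trans_le (abs_gammaStar_le_one hφ κ ts δ s))

theorem blockAvg_eq_of_forall_notMem_Ioc {d : ℕ} (φ : C(I01, Fin (d+2) → ℝ)) {κ : ℕ} {s u : ℝ}
    (hsu : s ≤ u) (hfree : ∀ m < κ, (m : ℝ) / κ ∉ Ioc s u) : blockAvg φ κ s = blockAvg φ κ u := by
  suffices h : min ⌊s * κ⌋₊ (κ - 1) = min ⌊u * κ⌋₊ (κ - 1) by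
    funext i; simp only [blockAvg, h]
  have hle : min ⌊s * κ⌋₊ (κ - 1) ≤ min ⌊u * κ⌋₊ (κ - 1) :=
    min_le_min_right _ (Nat.floor_mono (by gcongr))
  by_contra hne
  set m := min ⌊s * κ⌋₊ (κ - 1)
  have hlt : m < min ⌊u * κ⌋₊ (κ - 1) := lt_of_le_of_ne hle hne
  have hκ : (0 : ℝ) < κ := Nat.cast_pos.2 (by omega)
  refine hfree (m + 1) (by omega) ⟨?_, ?_⟩
  · have : ⌊s * κ⌋₊ < m + 1 := by omega
    rw [lt_div_iff₀ hκ]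
    exact_mod_cast (Nat.floor_lt' m.succ_ne_zero).1 this
  · have : m + 1 ≤ ⌊u * κ⌋₊ := by omega
    rw [div_le_iff₀ hκ]
    exact_mod_cast (Nat.le_floor_iff' m.succ_ne_zero).1 this

theorem sSup_switch_eq_of_forall_notMem_Ioc {d : ℕ} {ts : ℕ → ℝ} {s u : ℝ} (hsu : s ≤ u)
    (hfree : ∀ l ≤ d, ts l ∉ Ioc s u) :
    {l : ℕ | l ≤ d ∧ ts l ≤ s} = {l : ℕ | l ≤ d ∧ ts l ≤ u} := by
  ext l
  refine ⟨fun hl => ⟨hl.1, hl.2.trans hsu⟩, fun hl => ⟨hl.1, ?_⟩⟩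
  by_contra h
  exact hfree l hl.1 ⟨lt_of_not_ge h, hl.2⟩

theorem exists_finset_gammaStar_eq {d : ℕ} (φ : C(I01, Fin (d+2) → ℝ)) (κ : ℕ) (ts : ℕ → ℝ)
    (δ : ℝ) : ∃ B : Finset ℝ, ∀ s u, s ≤ u → (∀ b ∈ B, b ∉ Ioc s u) →
      gammaStar (fun t => blockAvg φ κ t) ts δ s = gammaStar (fun t => blockAvg φ κ t) ts δ u := by
  refine ⟨insert δ ((Finset.range κ).image (fun m : ℕ => (m : ℝ) / κ)
    ∪ (Finset.range (d + 1)).image ts), fun s u hsu hfree => ?_⟩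
  simp only [Finset.mem_insert, Finset.mem_union, Finset.mem_image, Finset.mem_range] at hfree
  unfold gammaStar
  by_cases hδs : δ ≤ s
  · rw [if_pos hδs, if_pos (hδs.trans hsu)]
    exact blockAvg_eq_of_forall_notMem_Ioc φ hsu fun m hm => hfree _ (Or.inr (Or.inl ⟨m, hm, rfl⟩))
  have hδu : ¬ δ ≤ u := fun hδu => hfree δ (Or.inl rfl) ⟨lt_of_not_ge hδs, hδu⟩
  rw [if_neg hδs, if_neg hδu]
  have hts : ∀ l ≤ d, ts l ∉ Ioc s u := fun l hl =>
    hfree _ (Or.inr (Or.inr ⟨l, Nat.lt_succ_of_le hl, rfl⟩))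
  by_cases hu0 : u < ts 0
  · rw [if_pos (hsu.trans_lt hu0), if_pos hu0]
  have hs0 : ¬ s < ts 0 := fun hs0 => hts 0 (Nat.zero_le d) ⟨hs0, le_of_not_gt hu0⟩
  rw [if_neg hs0, if_neg hu0, sSup_switch_eq_of_forall_notMem_Ioc hsu hts]

section StoppedChain

variable {d : ℕ} (γs : ℝ → Fin (d+2) → ℝ) (ρ : ℕ → Fin (d+2) → ℝ) (X : ℕ → Fin (d+2) → ℝ)
  (c : ℕ → ℝ) (e : Fin (d+2) → ℝ) (θ δ : ℝ) (n : ℕ)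

theorem stopTau_le : stopTau X c e θ δ n ≤ n := Nat.sInf_le (Or.inl rfl)

theorem ctrlMean_eq_of_lt_stopTau {l : ℕ} (hl : l < stopTau X c e θ δ n) :
    ctrlMean γs ρ X c e θ δ n l = γs (l / n) := by
  refine if_pos ?_
  by_cases hfl : l ≤ ⌊δ * n⌋₊
  · exact Or.inl hfl
  have hceil : ⌈δ * n⌉₊ ≤ l := (Nat.ceil_le_floor_add_one _).trans (by omega)
  refine Or.inr ⟨hceil, fun i => not_lt.1 fun hi => ?_⟩
  have hln : l ≤ n := (hl.trans_le (stopTau_le X c e θ δ n)).le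
  exact hl.not_ge (Nat.sInf_le (Or.inr ⟨hceil, hln, i, hi⟩))

theorem ctrlMart_eq_of_le_stopTau {j : ℕ} (hj : j ≤ stopTau X c e θ δ n) :
    ctrlMart γs ρ X c e θ δ n j
      = fun i => X j i - 1 / n * ∑ l ∈ Finset.range j, γs (l / n) i - cvec d c i := by
  funext i
  simp only [ctrlMart]
  rw [Finset.sum_congr rfl fun l hl =>
    by rw [ctrlMean_eq_of_lt_stopTau γs ρ X c e θ δ n ((Finset.mem_range.1 hl).trans_le hj)]]

variable {γs ρ X c e θ δ n}

theorem stopTau_eq_self (hc : ∀ i, 0 ≤ cvec d c i) (hθ : 0 ≤ θ) (he : ∀ i, 0 ≤ e i)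
    (hn : 0 < n) {r : ℝ} (hr : ∀ i, r ≤ θ / 4 * (e i * δ))
    (hLB : ∀ j : ℕ, ⌊δ * (n : ℝ)⌋₊ ≤ j → j ≤ n → ∀ i : Fin (d+2),
      θ / 2 * (e i * (j / n) + cvec d c i) ≤ 1 / n * ∑ l ∈ Finset.range j, γs (l / n) i
        + cvec d c i)
    (hM : ∀ i, |ctrlMart γs ρ X c e θ δ n (stopTau X c e θ δ n) i| ≤ r) :
    stopTau X c e θ δ n = n := by
  set τ := stopTau X c e θ δ n
  have hmem : τ ∈ ({n} ∪ {l : ℕ | ⌈δ * (n : ℝ)⌉₊ ≤ l ∧ l ≤ n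
      ∧ ∃ i, X l i < (θ / 4) * (e i * δ + cvec d c i)}) := Nat.sInf_mem ⟨n, Or.inl rfl⟩
  rcases hmem with hτ | ⟨hτδ, hτn, i, hXi⟩
  · exact hτ
  exfalso
  have hM' := hM i
  rw [ctrlMart_eq_of_le_stopTau γs ρ X c e θ δ n le_rfl] at hM'
  dsimp only at hM'
  have hLBi := hLB τ ((Nat.floor_le_ceil _).trans hτδ) hτn i
  have hδτ : e i * δ ≤ e i * (τ / n) := by
    refine mul_le_mul_of_nonneg_left ?_ (he i)
    rw [le_div_iff₀ (Nat.cast_pos.2 hn)]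
    exact (Nat.le_ceil _).trans (Nat.cast_le.2 hτδ)
  nlinarith [(abs_le.1 hM').1, hr i, mul_nonneg hθ (hc i), mul_le_mul_of_nonneg_left hδτ hθ]

theorem l1norm_sub_riemannSum_le_of_stopped (hc : ∀ i, 0 ≤ cvec d c i) (hθ : 0 ≤ θ)
    (he : ∀ i, 0 ≤ e i) (hn : 0 < n) {r : ℝ} (hr : ∀ i, r ≤ θ / 4 * (e i * δ))
    (hLB : ∀ j : ℕ, ⌊δ * (n : ℝ)⌋₊ ≤ j → j ≤ n → ∀ i : Fin (d+2),
      θ / 2 * (e i * (j / n) + cvec d c i) ≤ 1 / n * ∑ l ∈ Finset.range j, γs (l / n) i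
        + cvec d c i)
    (hM : ∀ j ≤ n, l1norm (ctrlMart γs ρ X c e θ δ n (min j (stopTau X c e θ δ n))) ≤ r)
    {j : ℕ} (hj : j ≤ n) :
    l1norm (fun i => X j i - 1 / n * ∑ l ∈ Finset.range j, γs (l / n) i - cvec d c i) ≤ r := by
  have hτ : stopTau X c e θ δ n = n := by
    refine stopTau_eq_self (ρ := ρ) hc hθ he hn hr hLB fun i => (abs_le_l1norm _ i).trans ?_
    simpa only [min_eq_right (stopTau_le X c e θ δ n)] using hM n le_rfl
  have := hM j hj
  rwa [min_eq_left (hj.trans_eq hτ.symm),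
    ctrlMart_eq_of_le_stopTau γs ρ X c e θ δ n (hj.trans_eq hτ.symm)] at this

end StoppedChain

theorem l1norm_lineInterp_sub_le {d : ℕ} {γs : ℝ → Fin (d+2) → ℝ} {B : Finset ℝ}
    (hγ : ∀ s i, |γs s i| ≤ 1) (hint : ∀ i a b, IntervalIntegrable (fun s => γs s i) volume a b)
    (hconst : ∀ s u, s ≤ u → (∀ b ∈ B, b ∉ Ioc s u) → γs s = γs u)
    {X : ℕ → Fin (d+2) → ℝ} {a : Fin (d+2) → ℝ} {n : ℕ} (hn : 0 < n) {η : ℝ}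
    (hX : ∀ j ≤ n, l1norm (fun i => X j i - 1 / n * ∑ l ∈ Finset.range j, γs (l / n) i - a i) ≤ η)
    {t : ℝ} (ht : t ∈ Icc 0 1) :
    l1norm (fun i => lineInterp (fun j => X j i) n t - (a i + ∫ s in (0 : ℝ)..t, γs s i))
      ≤ (d + 2) * (η + 2 * B.card / n + 1 / n) := by
  refine l1norm_le_of_forall_abs_le fun i => ?_
  have hF : LipschitzWith 1 fun t => a i + ∫ s in (0 : ℝ)..t, γs s i := by
    simpa using (LipschitzWith.const (a i)).add (lipschitzWith_one_integral (hγ · i) (hint i) 0)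
  refine abs_lineInterp_sub_le hn hF (fun j hj => ?_) ht
  have hriem := abs_riemannSum_sub_integral_le B (hγ · i) (hint i)
    (fun s u hsu hfree => congrFun (hconst s u hsu hfree) i) hn j
  calc |X j i - (a i + ∫ s in (0 : ℝ)..j / n, γs s i)|
      ≤ |X j i - 1 / n * ∑ l ∈ Finset.range j, γs (l / n) i - a i|
        + |1 / n * ∑ l ∈ Finset.range j, γs (l / n) i - ∫ s in (0 : ℝ)..j / n, γs s i| := by
        refine (abs_add_le _ _).trans_eq' ?_; ring_nf
    _ ≤ η + 2 * 1 * B.card / n :=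
        add_le_add ((abs_le_l1norm _ i).trans (hX j hj)) hriem
    _ = η + 2 * B.card / n := by ring

theorem controlled_chain_convergence_general
    {Ω : Type*} [MeasurableSpace Ω] (μ : Measure Ω)
    (c : ℕ → ℝ) (cc ctil : ℝ) (hLIM : LIMc c cc ctil) (d : ℕ)
    (φstar : C(I01, Fin (d+2) → ℝ)) (hφ : φstar ∈ Gamma d c)
    (e : Fin (d+2) → ℝ) (he : ∀ i, 0 < e i) (hes : ∑ i, e i = 1)
    (helast : ∀ i, e (Fin.last (d+1)) ≤ e i)
    (ℓC : C(I01, Fin (d+2) → ℝ))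
    (hℓ : ∀ (t : I01) (i : Fin (d+2)), ℓC t i = e i * (t : ℝ) + cvec d c i)
    (θ : ℝ) (hθ0 : 0 < θ) (hθ1 : θ ≤ 1) (κ : ℕ)
    (δ : ℝ) (hδ0 : 0 < δ)
    (hLB : ∀ᶠ n : ℕ in atTop, ∀ j : ℕ, ⌊δ * (n : ℝ)⌋₊ ≤ j → j ≤ n → ∀ i : Fin (d+2),
      (θ/2) * (e i * ((j : ℝ)/(n : ℝ)) + cvec d c i)
        ≤ (1/(n : ℝ)) * ∑ l ∈ Finset.range j,
            gammaStarFull φstar ℓC θ κ c δ ((l : ℝ)/(n : ℝ)) i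
          + cvec d c i)
    (Xb : ℕ → ℕ → Ω → Fin (d+2) → ℝ)
    (ρm : ℕ → ℕ → Ω → Fin (d+2) → ℝ)
    (CC : ℝ)
    (hA : ∀ n : ℕ, 1 ≤ n →
      μ {ω | ∃ j ≤ n,
          θ * e (Fin.last (d+1)) / (4 * (n : ℝ) ^ ((1 : ℝ)/8))
            < l1norm (ctrlMart (gammaStarFull φstar ℓC θ κ c δ) (fun l => ρm n l ω)
                (fun j => Xb n j ω) c e θ δ n
                (min j (stopTau (fun j => Xb n j ω) c e θ δ n)))}
        ≤ ENNReal.ofReal (CC * (n : ℝ) ^ (-(3 : ℝ)/2))) :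
    (∀ᵐ ω ∂μ, ∀ ε > (0:ℝ), ∃ N : ℕ, ∀ n ≥ N, ∀ j ≤ n,
        l1norm (fun i => Xb n j ω i
          - (1/(n : ℝ)) * ∑ l ∈ Finset.range j,
              gammaStarFull φstar ℓC θ κ c δ ((l : ℝ)/(n : ℝ)) i
          - cvec d c i) ≤ ε)
    ∧ (∀ᵐ ω ∂μ, ∀ ε > (0:ℝ), ∃ N : ℕ, ∀ n ≥ N, ∀ t ∈ Set.Icc (0:ℝ) 1,
        l1norm (fun i =>
          ((1 - ((n : ℝ) * t - (⌊(n : ℝ) * t⌋₊ : ℝ))) * Xb n ⌊(n : ℝ) * t⌋₊ ω i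
            + ((n : ℝ) * t - (⌊(n : ℝ) * t⌋₊ : ℝ)) * Xb n (⌊(n : ℝ) * t⌋₊ + 1) ω i)
          - psiStarFull φstar ℓC θ κ c δ t i) ≤ ε) := by
  set γs := gammaStarFull φstar ℓC θ κ c δ
  have he1 : ∀ i, |e i| ≤ 1 := fun i => by
    rw [abs_of_pos (he i), ← hes]
    exact Finset.single_le_sum (f := e) (fun j _ => (he j).le) (Finset.mem_univ i)
  have hlip : ∀ i, LipschitzWith 1 fun t => pext (phiMix θ φstar ℓC) t i := fun i =>
    lipschitzWith_pext_phiMix hθ0.le hθ1 (hφ.2.2.1 i) (lipschitzWith_pext_affine (he1 i) (hℓ · i))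
  have hγ : ∀ s i, |γs s i| ≤ 1 := fun s i => abs_gammaStar_le_one (hlip i) κ _ δ s
  have hint : ∀ i a b, IntervalIntegrable (fun s => γs s i) volume a b := fun i =>
    intervalIntegrable_gammaStar (hlip i) κ _ δ
  obtain ⟨B, hB⟩ := exists_finset_gammaStar_eq (phiMix θ φstar ℓC) κ
    (tSwitchFull φstar ℓC θ κ c δ) δ
  set r : ℕ → ℝ := fun n => θ * e (Fin.last (d+1)) / (4 * (n : ℝ) ^ ((1 : ℝ)/8))
  have hr : Tendsto r atTop (𝓝 0) :=
    tendsto_const_nhds.div_atTop ((tendsto_natCast_rpow_atTop (by norm_num)).const_mul_atTop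
      (by norm_num))
  have hrδ : ∀ᶠ n in atTop, ∀ i, r n ≤ θ / 4 * (e i * δ) := eventually_all.2 fun i =>
    eventually_mul_div_rpow_le hθ0.le (he _).le (helast i) hδ0 (by norm_num)
  have hdisc : ∀ᵐ ω ∂μ, ∀ᶠ n in atTop, ∀ j ≤ n, l1norm (fun i => Xb n j ω i
      - 1 / n * ∑ l ∈ Finset.range j, γs (l / n) i - cvec d c i) ≤ r n := by
    filter_upwards [ae_eventually_notMem_of_measure_le_rpow (by norm_num) hA] with ω hω
    filter_upwards [hω, hLB, hrδ, eventually_gt_atTop 0] with n hn hLBn hrn hn0 j hj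
    exact l1norm_sub_riemannSum_le_of_stopped (cvec_nonneg hLIM.nonneg d) hθ0.le (he · |>.le) hn0
      hrn hLBn (fun j hj => not_lt.1 fun h => hn ⟨j, hj, h⟩) hj
  refine ⟨?_, ?_⟩
  · filter_upwards [hdisc] with ω hω
    exact exists_forall_le_of_eventually_le hr hω
  · filter_upwards [hdisc] with ω hω
    refine exists_forall_le_of_eventually_le
      (a := fun n => (d + 2) * (r n + 2 * B.card / n + 1 / n))
      (by simpa using ((hr.add (tendsto_const_div_atTop_nhds_zero_nat _)).add
        (tendsto_const_div_atTop_nhds_zero_nat 1)).const_mul ((d : ℝ) + 2)) ?_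
    filter_upwards [hω, eventually_gt_atTop 0] with n hn hn0 t ht
    exact l1norm_lineInterp_sub_le hγ hint hB hn0 hn ht

/-- **Lemma (a.s. convergence of the controlled chain).**  For the controlled chain driven
by the controls built from `ψ*`, almost surely
`lim_n sup_{0≤j≤n} |X̄^n(j) - (1/n)Σ_{l<j} ψ̇*(l/n) - c^d| = 0`; in particular the
interpolated controlled paths converge uniformly to `ψ*` almost surely. -/
theorem controlled_chain_convergence
    {Ω : Type*} [MeasurableSpace Ω] (μ : Measure Ω) [IsProbabilityMeasure μ]
    (c : ℕ → ℝ) (cc ctil : ℝ) (hLIM : LIMc c cc ctil) (d : ℕ)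
    (φstar : C(I01, Fin (d+2) → ℝ)) (hφ : φstar ∈ Gamma d c)
    (e : Fin (d+2) → ℝ) (he : ∀ i, 0 < e i) (hes : ∑ i, e i = 1)
    (hie : ∑ i : Fin (d+2), ((i : ℕ) : ℝ) * e i ≤ 1)
    (helast : ∀ i, e (Fin.last (d+1)) ≤ e i)
    (ℓC : C(I01, Fin (d+2) → ℝ))
    (hℓ : ∀ (t : I01) (i : Fin (d+2)), ℓC t i = e i * (t : ℝ) + cvec d c i)
    (θ : ℝ) (hθ0 : 0 < θ) (hθ1 : θ ≤ 1) (κ : ℕ) (hκ : 1 ≤ κ)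
    (δ : ℝ) (hδ0 : 0 < δ) (hδ1 : δ ≤ 1)
    (hLB : ∀ᶠ n : ℕ in atTop, ∀ j : ℕ, ⌊δ * (n : ℝ)⌋₊ ≤ j → j ≤ n → ∀ i : Fin (d+2),
      (θ/2) * (e i * ((j : ℝ)/(n : ℝ)) + cvec d c i)
        ≤ (1/(n : ℝ)) * ∑ l ∈ Finset.range j,
            gammaStarFull φstar ℓC θ κ c δ ((l : ℝ)/(n : ℝ)) i
          + cvec d c i)
    (Xb : ℕ → ℕ → Ω → Fin (d+2) → ℝ) (hX0 : ∀ n ω, Xb n 0 ω = cvec d c)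
    (ρm : ℕ → ℕ → Ω → Fin (d+2) → ℝ)
    (CC : ℝ)
    (hA : ∀ n : ℕ, 1 ≤ n →
      μ {ω | ∃ j ≤ n,
          θ * e (Fin.last (d+1)) / (4 * (n : ℝ) ^ ((1 : ℝ)/8))
            < l1norm (ctrlMart (gammaStarFull φstar ℓC θ κ c δ) (fun l => ρm n l ω)
                (fun j => Xb n j ω) c e θ δ n
                (min j (stopTau (fun j => Xb n j ω) c e θ δ n)))}
        ≤ ENNReal.ofReal (CC * (n : ℝ) ^ (-(3 : ℝ)/2))) :
    (∀ᵐ ω ∂μ, ∀ ε > (0:ℝ), ∃ N : ℕ, ∀ n ≥ N, ∀ j ≤ n,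
        l1norm (fun i => Xb n j ω i
          - (1/(n : ℝ)) * ∑ l ∈ Finset.range j,
              gammaStarFull φstar ℓC θ κ c δ ((l : ℝ)/(n : ℝ)) i
          - cvec d c i) ≤ ε)
    ∧ (∀ᵐ ω ∂μ, ∀ ε > (0:ℝ), ∃ N : ℕ, ∀ n ≥ N, ∀ t ∈ Set.Icc (0:ℝ) 1,
        l1norm (fun i =>
          ((1 - ((n : ℝ) * t - (⌊(n : ℝ) * t⌋₊ : ℝ))) * Xb n ⌊(n : ℝ) * t⌋₊ ω i
            + ((n : ℝ) * t - (⌊(n : ℝ) * t⌋₊ : ℝ)) * Xb n (⌊(n : ℝ) * t⌋₊ + 1) ω i)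
          - psiStarFull φstar ℓC θ κ c δ t i) ≤ ε) :=
  controlled_chain_convergence_general μ c cc ctil hLIM d φstar hφ e he hes helast ℓC hℓ θ hθ0 hθ1 κ
    δ hδ0 hLB Xb ρm CC hA

end
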